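/- Let x : ℝ → ℝ be smooth and suppose the curve (x(y), y) satisfies ⟨diag(0,-1)·(x(y),y), N⟩ = k^{1/3}, where N = (1+x'²)^{-1/2}(-1, x') and k = -x''/(1+x'²)^{3/2}. Then x satisfies x'' = y³ (x')³. Moreover, if x'(y) ≠ 0 then (x'^{-2})' = -2y³, so x'(y)^{-2} = C₁ - y⁴/2 for some constant C₁ > 0, and x'(y) = ±(C₁ - y⁴/2)^{-1/2} on |y| < (2C₁)^{1/4}. -/

import Mathlib

/-- The real cube root. -/
noncomputable def realCbrt (x : ℝ) : ℝ := Real.sign x * |x| ^ ((1 : ℝ) / 3)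

lemma realCbrt_cube (c : ℝ) : (realCbrt c) ^ 3 = c := by
  unfold realCbrt
  have habs : (|c| ^ ((1:ℝ)/3)) ^ (3:ℕ) = |c| := by
    rw [← Real.rpow_natCast (|c| ^ ((1:ℝ)/3)) 3, ← Real.rpow_mul (abs_nonneg c)]
    norm_num
  rcases lt_trichotomy c 0 with h|h|h
  · rw [Real.sign_of_neg h, mul_pow, habs, abs_of_neg h]; ring
  · simp [h]
  · rw [Real.sign_of_pos h, mul_pow, habs, abs_of_pos h]; ring

/-- Contraction in a single direction: a graph solution `(x(y), y)` of
`⟨diag(0,-1)·(x,y), N⟩ = k^{1/3}` satisfies `x'' = y³ (x')³`; moreover if `x' ≠ 0`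
then `((x')⁻²)' = -2 y³`, so `(x')⁻² = C₁ - y⁴/2` with `C₁ > 0` and
`x' = ±(C₁ - y⁴/2)^{-1/2}` on `|y| < (2C₁)^{1/4}`. -/
theorem contraction_single_direction (x : ℝ → ℝ) (hx : ContDiff ℝ (⊤ : ℕ∞) x)
    (heq : ∀ y : ℝ,
      (-y) * deriv x y * (1 + (deriv x y) ^ 2) ^ (-(1 : ℝ) / 2) =
        realCbrt (-(deriv (deriv x) y) / (1 + (deriv x y) ^ 2) ^ ((3 : ℝ) / 2))) :
    (∀ y : ℝ, deriv (deriv x) y = y ^ 3 * (deriv x y) ^ 3) ∧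
      ((∀ y : ℝ, deriv x y ≠ 0) →
        (∀ y : ℝ, deriv (fun t => ((deriv x t) ^ 2)⁻¹) y = -2 * y ^ 3) ∧
        ∃ C₁ : ℝ, 0 < C₁ ∧ ∀ y : ℝ,
          ((deriv x y) ^ 2)⁻¹ = C₁ - y ^ 4 / 2 ∧
          (|y| < (2 * C₁) ^ ((1 : ℝ) / 4) →
            deriv x y = (C₁ - y ^ 4 / 2) ^ (-(1 : ℝ) / 2) ∨
              deriv x y = -((C₁ - y ^ 4 / 2) ^ (-(1 : ℝ) / 2)))) := by
  have hode : ∀ y : ℝ, deriv (deriv x) y = y ^ 3 * (deriv x y) ^ 3 := by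
    intro y
    set a := deriv x y with ha
    set b := deriv (deriv x) y with hb
    set s := 1 + a ^ 2 with hs
    have hspos : (0:ℝ) < s := by positivity
    have h3 : ((-y) * a * s ^ (-(1:ℝ)/2)) ^ 3 = -b / s ^ ((3:ℝ)/2) := by
      rw [heq y]; exact realCbrt_cube _
    have hcube : (s ^ (-(1:ℝ)/2)) ^ (3:ℕ) = s ^ (-(3:ℝ)/2) := by
      rw [← Real.rpow_natCast (s ^ (-(1:ℝ)/2)) 3, ← Real.rpow_mul hspos.le]
      norm_num
    have h4 : (-y) ^ 3 * a ^ 3 * s ^ (-(3:ℝ)/2) = -b * s ^ (-(3:ℝ)/2) := by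
      rw [← hcube]
      have : -b / s ^ ((3:ℝ)/2) = -b * s ^ (-(3:ℝ)/2) := by
        rw [div_eq_mul_inv, ← Real.rpow_neg hspos.le]; norm_num
      rw [← hcube] at this
      calc (-y) ^ 3 * a ^ 3 * (s ^ (-(1:ℝ)/2)) ^ (3:ℕ)
          = ((-y) * a * s ^ (-(1:ℝ)/2)) ^ 3 := by ring
        _ = -b / s ^ ((3:ℝ)/2) := h3
        _ = -b * (s ^ (-(1:ℝ)/2)) ^ (3:ℕ) := this
    have hne : s ^ (-(3:ℝ)/2) ≠ 0 := (Real.rpow_pos_of_pos hspos _).ne'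
    have := mul_right_cancel₀ hne h4
    nlinarith [this]
  refine ⟨hode, fun hne => ?_⟩
  have hdx : Differentiable ℝ (deriv x) := by
    have hInf : ContDiff ℝ ((⊤ : ℕ∞) : WithTop ℕ∞) x := hx.of_le (by simp)
    exact (contDiff_infty_iff_deriv.mp hInf).2.differentiable (by simp)
  have key : ∀ y : ℝ, HasDerivAt (fun t => ((deriv x t) ^ 2)⁻¹) (-2 * y ^ 3) y := by
    intro y
    have hg : HasDerivAt (deriv x) (deriv (deriv x) y) y := (hdx y).hasDerivAt
    have h1 : HasDerivAt (fun t => (deriv x t) ^ 2)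
        (2 * deriv x y ^ 1 * deriv (deriv x) y) y := hg.pow 2
    have h2 : HasDerivAt (fun t => ((deriv x t) ^ 2)⁻¹)
        (-(2 * deriv x y ^ 1 * deriv (deriv x) y) / (deriv x y ^ 2) ^ 2) y :=
      h1.inv (pow_ne_zero 2 (hne y))
    convert h2 using 1
    rw [hode y]
    field_simp [hne y]
  have hder : ∀ y : ℝ, deriv (fun t => ((deriv x t) ^ 2)⁻¹) y = -2 * y ^ 3 :=
    fun y => (key y).deriv
  refine ⟨hder, ?_⟩
  set F : ℝ → ℝ := fun t => ((deriv x t) ^ 2)⁻¹ + t ^ 4 / 2 with hF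
  have hFder : ∀ y : ℝ, HasDerivAt F 0 y := by
    intro y
    have h2 : HasDerivAt (fun t : ℝ => t ^ 4 / 2) (4 * y ^ 3 / 2) y := by
      have := (hasDerivAt_pow 4 y).div_const 2
      simpa using this
    have : HasDerivAt F (-2 * y ^ 3 + 4 * y ^ 3 / 2) y := (key y).add h2
    convert this using 1; ring
  have hconst : ∀ y : ℝ, F y = F 0 := fun y =>
    is_const_of_deriv_eq_zero (fun y => (hFder y).differentiableAt)
      (fun y => (hFder y).deriv) y 0
  set C₁ := ((deriv x 0) ^ 2)⁻¹ with hC₁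
  have hC₁pos : 0 < C₁ :=
    inv_pos.mpr ((sq_nonneg _).lt_of_ne (Ne.symm (pow_ne_zero 2 (hne 0))))
  refine ⟨C₁, hC₁pos, fun y => ?_⟩
  have hFy : ((deriv x y) ^ 2)⁻¹ = C₁ - y ^ 4 / 2 := by
    have := hconst y
    simp only [hF] at this
    simp at this
    linarith
  refine ⟨hFy, fun hy => ?_⟩
  have hpos : 0 < C₁ - y ^ 4 / 2 := by
    rw [← hFy]
    exact inv_pos.mpr ((sq_nonneg _).lt_of_ne (Ne.symm (pow_ne_zero 2 (hne y))))
  set p := (C₁ - y ^ 4 / 2) ^ (-(1:ℝ)/2) with hp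
  have hp2 : p ^ (2:ℕ) = (C₁ - y ^ 4 / 2)⁻¹ := by
    rw [hp, ← Real.rpow_natCast ((C₁ - y ^ 4 / 2) ^ (-(1:ℝ)/2)) 2,
      ← Real.rpow_mul hpos.le]
    norm_num
    rw [Real.rpow_neg_one]
  have ha2 : (deriv x y) ^ 2 = (C₁ - y ^ 4 / 2)⁻¹ := by
    rw [← hFy, inv_inv]
  have : (deriv x y) ^ 2 = p ^ 2 := by rw [ha2, hp2]
  rcases sq_eq_sq_iff_eq_or_eq_neg.mp this with h | h
  · exact Or.inl h
  · exact Or.inr h
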